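/- A strategy profile p with counts (u_i, v_i) is a Nash equilibrium if and only if: (i) for all i with u_i > 0, q̄(u_i + v_i q̄) ≤ u_{i*} + v_{i*} q̄ + q̄ + qμ/φ, and (ii) for all i, l such that some user at s_i relays through s_l, u_l + v_l q̄ ≤ min{ q̄(u_i + 1 + v_i q̄) - qμ/φ, u_{i*} + v_{i*} q̄ + q̄ }, where i* minimizes u_i + v_i q̄ over i ∈ [m]. -/

import Mathlib

open Finset

/-- A pure routing profile in the loss network with `m` sources, where source `i`
has `n i` users: `u i` users at source `i` choose the direct path, and `r i j`
users at source `i` relay through source `j` (indirect path `(s_i, s_j, d)`). -/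
structure Profile (m : ℕ) (n : Fin m → ℕ) where
  u : Fin m → ℕ
  r : Fin m → Fin m → ℕ
  diag : ∀ i, r i i = 0
  total : ∀ i, u i + ∑ j, r i j = n i

namespace Profile

variable {m : ℕ} {n : Fin m → ℕ}

/-- Number of users relaying through source `j`. -/
def v (p : Profile m n) (j : Fin m) : ℕ := ∑ i, p.r i j

/-- Traffic rate on the direct link `(s_i, d)`: `T_i = u_i φ + v_i q̄ φ`,
where `q̄` is the sidelink success probability. -/
noncomputable def T (φ qb : ℝ) (p : Profile m n) (i : Fin m) : ℝ :=
  (p.u i : ℝ) * φ + (p.v i : ℝ) * qb * φ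

/-- Total traffic rate arriving at the destination: `TR = Σ_i μ T_i/(T_i + μ)`. -/
noncomputable def TR (φ qb μ : ℝ) (p : Profile m n) : ℝ :=
  ∑ i, μ * p.T φ qb i / (p.T φ qb i + μ)

/-- Nash equilibrium: no single user can strictly decrease its loss rate by a
unilateral change of route.  A direct user at `s_i` (present iff `u i > 0`) may
deviate to the indirect path via any `j ≠ i`; a user at `s_i` relaying via `l`
(present iff `r i l > 0`) may deviate to its direct path or to the indirect path
via any other `j`.  Loss rates follow the loss-network formulas, with the traffic
of the target link adjusted for the deviating user's own flow. -/
noncomputable def isNE (φ q μ : ℝ) (p : Profile m n) : Prop :=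
  (∀ i j : Fin m, j ≠ i → 0 < p.u i →
      φ * p.T φ (1 - q) i / (p.T φ (1 - q) i + μ) ≤
        q * φ + (1 - q) * φ * (p.T φ (1 - q) j + (1 - q) * φ) /
          (p.T φ (1 - q) j + (1 - q) * φ + μ)) ∧
  (∀ i l : Fin m, l ≠ i → 0 < p.r i l →
      (q * φ + (1 - q) * φ * p.T φ (1 - q) l / (p.T φ (1 - q) l + μ) ≤
        φ * (p.T φ (1 - q) i + φ) / (p.T φ (1 - q) i + φ + μ)) ∧
      (∀ j : Fin m, j ≠ i → j ≠ l →
        q * φ + (1 - q) * φ * p.T φ (1 - q) l / (p.T φ (1 - q) l + μ) ≤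
          q * φ + (1 - q) * φ * (p.T φ (1 - q) j + (1 - q) * φ) /
            (p.T φ (1 - q) j + (1 - q) * φ + μ)))

end Profile

/-!
Write `x_i = u_i + v_i q̄ = T_i / φ`. A relayed user on a link carrying `T` loses
`φ (T + qμ) / (T + μ)`, so after cross-multiplying each kind of unilateral deviation is
unprofitable exactly when a linear inequality between loads holds: `q̄ x_i ≤ x_j + q̄ + qμ/φ` for a
direct user at `s_i` switching to relay via `s_j`, `x_l ≤ q̄ (x_i + 1) - qμ/φ` for a user at `s_i`
relaying via `s_l` switching to its direct path, and `x_l ≤ x_j + q̄` for it switching to relay via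
`s_j`. Each family over `j` is tightest at the minimizer `i*`, and the excluded indices `j = i`,
`j = l` may be added back because there these inequalities hold automatically (using `q ≥ 0`).
-/

section Arithmetic

variable {α : Type*} [Field α] [LinearOrder α] [IsStrictOrderedRing α] {a b c d : α}

theorem le_add_div_iff_mul_le_add (hc : 0 < c) : a ≤ b + d / c ↔ a * c ≤ b * c + d := by
  rw [← mul_le_mul_iff_of_pos_right hc, add_mul, div_mul_cancel₀ _ hc.ne']

theorem le_sub_div_iff_mul_le_sub (hc : 0 < c) : a ≤ b - d / c ↔ a * c ≤ b * c - d := by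
  rw [← mul_le_mul_iff_of_pos_right hc, sub_mul, div_mul_cancel₀ _ hc.ne']

theorem forall_imp_le_iff_le_at_argmin {ι β : Type*} [Preorder β] {y : ι → β} {k : ι}
    (hk : ∀ j, y k ≤ y j) {P : ι → Prop} {a : β} (hP : ∀ j, ¬ P j → a ≤ y j) :
    (∀ j, P j → a ≤ y j) ↔ a ≤ y k := by
  refine ⟨fun h => ?_, fun h j _ => h.trans (hk j)⟩
  by_cases hPk : P k
  · exact h k hPk
  · exact hP k hPk

end Arithmetic

section LossRates

variable {φ μ q : ℝ}

theorem relay_loss_eq {b : ℝ} (hb : b + μ ≠ 0) :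
    q * φ + (1 - q) * φ * b / (b + μ) = φ * (b + q * μ) / (b + μ) := by
  field_simp
  ring

theorem direct_loss_le_relay_loss_iff (hφ : 0 < φ) (hμ : 0 < μ) {a b : ℝ}
    (ha : 0 ≤ a) (hb : 0 ≤ b) :
    φ * a / (a + μ) ≤ q * φ + (1 - q) * φ * b / (b + μ) ↔ (1 - q) * a ≤ b + q * μ := by
  have key : φ * (b + q * μ) * (a + μ) - φ * a * (b + μ) = φ * μ * (b + q * μ - (1 - q) * a) := by
    ring
  rw [relay_loss_eq (by positivity), div_le_div_iff₀ (by positivity) (by positivity),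
    ← sub_nonneg, key, mul_nonneg_iff_of_pos_left (mul_pos hφ hμ), sub_nonneg]

theorem relay_loss_le_direct_loss_iff (hφ : 0 < φ) (hμ : 0 < μ) {a c : ℝ}
    (ha : 0 ≤ a) (hc : 0 ≤ c) :
    q * φ + (1 - q) * φ * a / (a + μ) ≤ φ * c / (c + μ) ↔ a ≤ (1 - q) * c - q * μ := by
  have key : φ * c * (a + μ) - φ * (a + q * μ) * (c + μ) = φ * μ * ((1 - q) * c - q * μ - a) := by
    ring
  rw [relay_loss_eq (by positivity), div_le_div_iff₀ (by positivity) (by positivity),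
    ← sub_nonneg, key, mul_nonneg_iff_of_pos_left (mul_pos hφ hμ), sub_nonneg]

theorem relay_loss_le_relay_loss_iff (hφ : 0 < φ) (hμ : 0 < μ) (hq : q < 1) {a b : ℝ}
    (ha : 0 ≤ a) (hb : 0 ≤ b) :
    q * φ + (1 - q) * φ * a / (a + μ) ≤ q * φ + (1 - q) * φ * b / (b + μ) ↔ a ≤ b := by
  have key : φ * (b + q * μ) * (a + μ) - φ * (a + q * μ) * (b + μ) =
      φ * μ * (1 - q) * (b - a) := by
    ring
  rw [relay_loss_eq (by positivity), relay_loss_eq (by positivity),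
    div_le_div_iff₀ (by positivity) (by positivity), ← sub_nonneg, key,
    mul_nonneg_iff_of_pos_left (mul_pos (mul_pos hφ hμ) (sub_pos.2 hq)), sub_nonneg]

end LossRates

namespace Profile

variable {m : ℕ} {n : Fin m → ℕ}

def load (qb : ℝ) (p : Profile m n) (i : Fin m) : ℝ := p.u i + p.v i * qb

theorem T_eq_load_mul (φ qb : ℝ) (p : Profile m n) (i : Fin m) :
    p.T φ qb i = p.load qb i * φ := by
  unfold T load
  ring

theorem load_nonneg {qb : ℝ} (hqb : 0 ≤ qb) (p : Profile m n) (i : Fin m) : 0 ≤ p.load qb i := by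
  unfold load
  positivity

theorem T_nonneg {φ qb : ℝ} (hφ : 0 ≤ φ) (hqb : 0 ≤ qb) (p : Profile m n) (i : Fin m) :
    0 ≤ p.T φ qb i := by
  rw [T_eq_load_mul]
  exact mul_nonneg (p.load_nonneg hqb i) hφ

variable {φ μ q : ℝ}

theorem direct_deviation_iff (hφ : 0 < φ) (hμ : 0 < μ) (hq : q ≤ 1) (p : Profile m n)
    (i j : Fin m) :
    φ * p.T φ (1 - q) i / (p.T φ (1 - q) i + μ) ≤
        q * φ + (1 - q) * φ * (p.T φ (1 - q) j + (1 - q) * φ) /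
          (p.T φ (1 - q) j + (1 - q) * φ + μ) ↔
      (1 - q) * p.load (1 - q) i ≤ p.load (1 - q) j + (1 - q) + q * μ / φ := by
  have hqb : 0 ≤ 1 - q := sub_nonneg.2 hq
  rw [direct_loss_le_relay_loss_iff hφ hμ (p.T_nonneg hφ.le hqb i)
      (add_nonneg (p.T_nonneg hφ.le hqb j) (by positivity)),
    le_add_div_iff_mul_le_add hφ, T_eq_load_mul, T_eq_load_mul]
  ring_nf

theorem relay_to_direct_deviation_iff (hφ : 0 < φ) (hμ : 0 < μ) (hq : q ≤ 1) (p : Profile m n)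
    (i l : Fin m) :
    q * φ + (1 - q) * φ * p.T φ (1 - q) l / (p.T φ (1 - q) l + μ) ≤
        φ * (p.T φ (1 - q) i + φ) / (p.T φ (1 - q) i + φ + μ) ↔
      p.load (1 - q) l ≤ (1 - q) * (p.u i + 1 + p.v i * (1 - q)) - q * μ / φ := by
  have hqb : 0 ≤ 1 - q := sub_nonneg.2 hq
  rw [relay_loss_le_direct_loss_iff hφ hμ (p.T_nonneg hφ.le hqb l)
      (add_nonneg (p.T_nonneg hφ.le hqb i) hφ.le),
    le_sub_div_iff_mul_le_sub hφ, T_eq_load_mul, T_eq_load_mul]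
  unfold load
  ring_nf

theorem relay_to_relay_deviation_iff (hφ : 0 < φ) (hμ : 0 < μ) (hq : q < 1) (p : Profile m n)
    (l j : Fin m) :
    q * φ + (1 - q) * φ * p.T φ (1 - q) l / (p.T φ (1 - q) l + μ) ≤
        q * φ + (1 - q) * φ * (p.T φ (1 - q) j + (1 - q) * φ) /
          (p.T φ (1 - q) j + (1 - q) * φ + μ) ↔
      p.load (1 - q) l ≤ p.load (1 - q) j + (1 - q) := by
  have hqb : 0 ≤ 1 - q := sub_nonneg.2 hq.le
  rw [relay_loss_le_relay_loss_iff hφ hμ hq (p.T_nonneg hφ.le hqb l)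
      (add_nonneg (p.T_nonneg hφ.le hqb j) (by positivity)),
    T_eq_load_mul, T_eq_load_mul, ← add_mul, mul_le_mul_iff_of_pos_right hφ]

theorem isNE_iff (hφ : 0 < φ) (hμ : 0 < μ) (hq : q < 1) (p : Profile m n) :
    p.isNE φ q μ ↔
      (∀ i : Fin m, 0 < p.u i → ∀ j : Fin m, j ≠ i →
          (1 - q) * p.load (1 - q) i ≤ p.load (1 - q) j + (1 - q) + q * μ / φ) ∧
      (∀ i l : Fin m, l ≠ i → 0 < p.r i l →
          p.load (1 - q) l ≤ (1 - q) * (p.u i + 1 + p.v i * (1 - q)) - q * μ / φ ∧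
          ∀ j : Fin m, j ≠ i → j ≠ l → p.load (1 - q) l ≤ p.load (1 - q) j + (1 - q)) := by
  simp only [isNE, p.direct_deviation_iff hφ hμ hq.le, p.relay_to_direct_deviation_iff hφ hμ hq.le,
    p.relay_to_relay_deviation_iff hφ hμ hq]
  exact and_congr_left' <| forall_congr' fun i =>
    ⟨fun h hu j hj => h j hj hu, fun h j hj hu => h hu j hj⟩

end Profile

/-- Characterization of Nash equilibria.  Let `i*` minimize `u_i + v_i q̄` over all
sources.  A profile `p` is a Nash equilibrium iff:
(i) for all `i` with `u i > 0`, `q̄(u_i + v_i q̄) ≤ u_{i*} + v_{i*} q̄ + q̄ + qμ/φ`; and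
(ii) for all `i, l` such that some user at `s_i` relays through `s_l`,
`u_l + v_l q̄ ≤ min { q̄(u_i + 1 + v_i q̄) - qμ/φ , u_{i*} + v_{i*} q̄ + q̄ }`. -/
theorem NE_characterization {m : ℕ} {n : Fin m → ℕ} (φ μ q : ℝ)
    (hφ : 0 < φ) (hμ : 0 < μ) (hq0 : 0 < q) (hq1 : q < 1)
    (p : Profile m n) (istar : Fin m)
    (hstar : ∀ j : Fin m,
      (p.u istar : ℝ) + (p.v istar : ℝ) * (1 - q) ≤
        (p.u j : ℝ) + (p.v j : ℝ) * (1 - q)) :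
    p.isNE φ q μ ↔
      ((∀ i : Fin m, 0 < p.u i →
          (1 - q) * ((p.u i : ℝ) + (p.v i : ℝ) * (1 - q)) ≤
            (p.u istar : ℝ) + (p.v istar : ℝ) * (1 - q) + (1 - q) + q * μ / φ) ∧
       (∀ i l : Fin m, l ≠ i → 0 < p.r i l →
          (p.u l : ℝ) + (p.v l : ℝ) * (1 - q) ≤
            min ((1 - q) * ((p.u i : ℝ) + 1 + (p.v i : ℝ) * (1 - q)) - q * μ / φ)
              ((p.u istar : ℝ) + (p.v istar : ℝ) * (1 - q) + (1 - q)))) := by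
  have hqb : 0 ≤ 1 - q := sub_nonneg.2 hq1.le
  have hload := p.load_nonneg hqb
  have hqμφ : 0 ≤ q * μ / φ := by positivity
  rw [p.isNE_iff hφ hμ hq1]
  refine and_congr (forall₂_congr fun i _ => ?_) (forall₄_congr fun i l _ _ => ?_)
  · refine forall_imp_le_iff_le_at_argmin (P := (· ≠ i))
      (y := fun j => p.load (1 - q) j + (1 - q) + q * μ / φ)
      (fun j => by gcongr; exact hstar j) fun j hj => ?_
    obtain rfl : j = i := not_not.1 hj
    linarith [mul_nonneg hq0.le (hload j)]
  · rw [le_min_iff]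
    refine and_congr_right fun hdirect => (forall_congr' fun j => and_imp.symm).trans ?_
    refine forall_imp_le_iff_le_at_argmin (P := fun j => j ≠ i ∧ j ≠ l)
      (y := fun j => p.load (1 - q) j + (1 - q))
      (fun j => by gcongr; exact hstar j) fun j hj => ?_
    obtain rfl | rfl : j = i ∨ j = l := by tauto
    · have hqx := mul_nonneg hq0.le (hload j)
      unfold Profile.load at hqx hdirect ⊢
      linarith
    · linarith
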